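/- arXiv:1405.3000 — 8 statements merged into one kernel-verified Lean document; each statement's English description precedes it below -/
import Mathlib

section
/- If S is a semicontent R-algebra and T is a semicontent S-algebra, then T is a semicontent R-algebra. -/
/-- The Ohm-Rush content of an element `f` of the `R`-algebra `S`:
the intersection of all ideals `I` of `R` such that `f ∈ IS`. -/
def orc (R S : Type*) [CommRing R] [CommRing S] [Algebra R S] (f : S) : Ideal R :=
  sInf {I : Ideal R | f ∈ I.map (algebraMap R S)}

/-- `S` is an Ohm-Rush `R`-algebra if `f ∈ orc(f)·S` for every `f ∈ S`. -/
def IsOhmRushAlgebra (R S : Type*) [CommRing R] [CommRing S] [Algebra R S] : Prop :=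
  ∀ f : S, f ∈ (orc R S f).map (algebraMap R S)

/-- `S` is a content `R`-algebra if it is a faithfully flat Ohm-Rush `R`-algebra
satisfying the Dedekind–Mertens condition. -/
def IsContentAlgebra (R S : Type*) [CommRing R] [CommRing S] [Algebra R S] : Prop :=
  Module.FaithfullyFlat R S ∧ IsOhmRushAlgebra R S ∧
    ∀ f g : S, ∃ n : ℕ, 1 ≤ n ∧
      orc R S f ^ n * orc R S g = orc R S f ^ (n - 1) * orc R S (f * g)

/-- `S` is a semicontent `R`-algebra if it is a faithfully flat Ohm-Rush `R`-algebra and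
for every multiplicatively closed subset `W ⊆ R` and all `f, g ∈ S` with `orc(f)·R_W = R_W`,
one has `orc(fg)·R_W = orc(g)·R_W`. -/
def IsSemicontentAlgebra (R S : Type*) [CommRing R] [CommRing S] [Algebra R S] : Prop :=
  Module.FaithfullyFlat R S ∧ IsOhmRushAlgebra R S ∧
    ∀ (W : Submonoid R) (f g : S),
      (orc R S f).map (algebraMap R (Localization W)) = ⊤ →
      (orc R S (f * g)).map (algebraMap R (Localization W)) =
        (orc R S g).map (algebraMap R (Localization W))

/-- `S` is a weak content `R`-algebra if it is an Ohm-Rush `R`-algebra and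
`orc(f)·orc(g) ⊆ √(orc(fg))` for all `f, g ∈ S`. -/
def IsWeakContentAlgebra (R S : Type*) [CommRing R] [CommRing S] [Algebra R S] : Prop :=
  IsOhmRushAlgebra R S ∧
    ∀ f g : S, orc R S f * orc R S g ≤ (orc R S (f * g)).radical

/-- `S` is a Gaussian `R`-algebra if it is an Ohm-Rush `R`-algebra and
`orc(fg) = orc(f)·orc(g)` for all `f, g ∈ S`. -/
def IsGaussianAlgebra (R S : Type*) [CommRing R] [CommRing S] [Algebra R S] : Prop :=
  IsOhmRushAlgebra R S ∧ ∀ f g : S, orc R S (f * g) = orc R S f * orc R S g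

/-!
Over `R`, the content of `f ∈ T` is the sum of the contents of the elements of `orc_S(f)`.
The inclusion `orc(g)·R_W ⊆ orc(fg)·R_W` may be checked at the primes `P` avoiding `W`, and
there some `h ∈ orc_S(f)` has `orc_R(h) ⊄ P`. The elements of `S` whose content is the unit
ideal of `R_P` form a multiplicative set `V ∋ h`, so localizing `T` over `S` at `V` makes
`orc_S(f)` the unit ideal: every `k ∈ orc_S(g)` has a multiple `v * k ∈ orc_S(fg)` with `v ∈ V`,
and multiplying by `v` does not change `orc_R(k)·R_P`.
-/

section Localization

variable {R : Type*} [CommRing R]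

lemma Localization.AtPrime.map_eq_top_iff_not_le (P : Ideal R) [P.IsPrime] (I : Ideal R) :
    I.map (algebraMap R (Localization.AtPrime P)) = ⊤ ↔ ¬ I ≤ P := by
  rw [← not_iff_not, not_not, ← ne_eq,
    IsLocalization.map_algebraMap_ne_top_iff_disjoint P.primeCompl, Ideal.primeCompl,
    Submonoid.coe_set_mk, Subsemigroup.coe_set_mk, disjoint_compl_left_iff,
    SetLike.coe_subset_coe]

/-- For `a ∈ I`, a prime containing the colon ideal `(J : a)` and avoiding `W` would violate the
hypothesis, so `(J : a)` meets `W`. -/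
lemma Ideal.map_le_map_localization_of_forall_isPrime (W : Submonoid R) {I J : Ideal R}
    (h : ∀ (P : Ideal R) [P.IsPrime], Disjoint (W : Set R) P →
      I.map (algebraMap R (Localization.AtPrime P)) ≤
        J.map (algebraMap R (Localization.AtPrime P))) :
    I.map (algebraMap R (Localization W)) ≤ J.map (algebraMap R (Localization W)) := by
  rw [Ideal.map_le_iff_le_comap]
  intro a ha
  rw [Ideal.mem_comap, IsLocalization.algebraMap_mem_map_algebraMap_iff W]
  by_contra hW
  have hdisj : Disjoint (J.colon (Ideal.span {a}) : Set R) W :=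
    Set.disjoint_left.2 fun w hwC hw => hW ⟨w, hw, Ideal.mem_colon_span_singleton.1 hwC⟩
  obtain ⟨P, hP, hCP, hPW⟩ := (J.colon (Ideal.span {a})).exists_le_prime_disjoint W hdisj
  obtain ⟨v, hv, hva⟩ := (IsLocalization.algebraMap_mem_map_algebraMap_iff P.primeCompl _ _ _).1
    (h P hPW.symm (Ideal.mem_map_of_mem _ ha))
  exact hv (hCP (Ideal.mem_colon_span_singleton.2 hva))

end Localization

section OhmRush

variable {R S : Type*} [CommRing R] [CommRing S] [Algebra R S]

lemma orc_le {I : Ideal R} {f : S} (h : f ∈ I.map (algebraMap R S)) : orc R S f ≤ I :=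
  sInf_le h

lemma IsOhmRushAlgebra.orc_mul_le (hS : IsOhmRushAlgebra R S) (f g : S) :
    orc R S (f * g) ≤ orc R S g :=
  orc_le (Ideal.mul_mem_left _ f (hS g))

lemma orc_one [Module.FaithfullyFlat R S] : orc R S (1 : S) = ⊤ := by
  refine eq_top_iff.2 (le_sInf fun I (hI : (1 : S) ∈ I.map (algebraMap R S)) => ?_)
  rwa [top_le_iff, Ideal.eq_top_iff_one, ← Ideal.comap_map_eq_self_of_faithfullyFlat (B := S) I,
    Ideal.mem_comap, map_one]

end OhmRush

section Tower

variable {R S T : Type*} [CommRing R] [CommRing S] [CommRing T]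
  [Algebra R S] [Algebra S T] [Algebra R T] [IsScalarTower R S T]

lemma orc_le_orc_of_mem_orc {f : T} {h : S} (hh : h ∈ orc S T f) : orc R S h ≤ orc R T f :=
  le_sInf fun I (hI : f ∈ I.map (algebraMap R T)) => by
    rw [IsScalarTower.algebraMap_eq R S T, ← Ideal.map_map] at hI
    exact orc_le (orc_le hI hh)

lemma mem_map_iSup_orc (hS : IsOhmRushAlgebra R S) (hT : IsOhmRushAlgebra S T) (f : T) :
    f ∈ (⨆ h ∈ orc S T f, orc R S h).map (algebraMap R T) := by
  have hle : orc S T f ≤ (⨆ h ∈ orc S T f, orc R S h).map (algebraMap R S) := fun h hh =>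
    Ideal.map_mono (le_iSup₂ (f := fun h _ => orc R S h) h hh) (hS h)
  rw [IsScalarTower.algebraMap_eq R S T, ← Ideal.map_map]
  exact Ideal.map_mono hle (hT f)

theorem orc_eq_iSup_orc (hS : IsOhmRushAlgebra R S) (hT : IsOhmRushAlgebra S T) (f : T) :
    orc R T f = ⨆ h ∈ orc S T f, orc R S h :=
  le_antisymm (orc_le (mem_map_iSup_orc hS hT f)) (iSup₂_le fun _ => orc_le_orc_of_mem_orc)

theorem IsOhmRushAlgebra.trans (hS : IsOhmRushAlgebra R S) (hT : IsOhmRushAlgebra S T) :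
    IsOhmRushAlgebra R T := fun f => by
  rw [orc_eq_iSup_orc hS hT]
  exact mem_map_iSup_orc hS hT f

lemma exists_mem_orc_not_le_of_not_le (hS : IsOhmRushAlgebra R S) (hT : IsOhmRushAlgebra S T)
    {f : T} {P : Ideal R} (hf : ¬ orc R T f ≤ P) : ∃ h ∈ orc S T f, ¬ orc R S h ≤ P := by
  contrapose! hf
  rw [orc_eq_iSup_orc hS hT]
  exact iSup₂_le hf

end Tower

namespace IsSemicontentAlgebra

variable {R S : Type*} [CommRing R] [CommRing S] [Algebra R S]

def unitContentSubmonoid (hS : IsSemicontentAlgebra R S) (W : Submonoid R) : Submonoid S where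
  carrier := {s | (orc R S s).map (algebraMap R (Localization W)) = ⊤}
  one_mem' := by
    have := hS.1
    simp only [Set.mem_ofPred_eq, orc_one, Ideal.map_top]
  mul_mem' {s t} hs ht := by
    simp only [Set.mem_ofPred_eq] at hs ht ⊢
    rwa [hS.2.2 W s t hs]

variable {T : Type*} [CommRing T] [Algebra S T] [Algebra R T] [IsScalarTower R S T]

lemma map_orc_le_map_orc_mul (hS : IsSemicontentAlgebra R S) (hT : IsSemicontentAlgebra S T)
    (W : Submonoid R) {f g : T} {h : S} (hh : h ∈ orc S T f)
    (hhW : (orc R S h).map (algebraMap R (Localization W)) = ⊤) :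
    (orc R T g).map (algebraMap R (Localization W)) ≤
      (orc R T (f * g)).map (algebraMap R (Localization W)) := by
  set V := hS.unitContentSubmonoid W
  have hV : (orc S T (f * g)).map (algebraMap S (Localization V)) =
      (orc S T g).map (algebraMap S (Localization V)) :=
    hT.2.2 V f g (Ideal.eq_top_of_isUnit_mem _ (Ideal.mem_map_of_mem _ hh)
      (IsLocalization.map_units (Localization V) (⟨h, hhW⟩ : V)))
  rw [orc_eq_iSup_orc hS.2.1 hT.2.1 g, Ideal.map_le_iff_le_comap]
  refine iSup₂_le fun k hk => Ideal.map_le_iff_le_comap.1 ?_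
  obtain ⟨v, hv, hvk⟩ :=
    (IsLocalization.algebraMap_mem_map_algebraMap_iff V (Localization V) _ k).1
      (hV.ge (Ideal.mem_map_of_mem _ hk))
  calc (orc R S k).map (algebraMap R (Localization W))
      = (orc R S (v * k)).map (algebraMap R (Localization W)) := (hS.2.2 W v k hv).symm
    _ ≤ _ := Ideal.map_mono (orc_le_orc_of_mem_orc hvk)

end IsSemicontentAlgebra

/-- Transitivity of the semicontent algebra property. -/
theorem isSemicontentAlgebra_trans (R S T : Type*) [CommRing R] [CommRing S] [CommRing T]
    [Algebra R S] [Algebra S T] [Algebra R T] [IsScalarTower R S T]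
    (hS : IsSemicontentAlgebra R S) (hT : IsSemicontentAlgebra S T) :
    IsSemicontentAlgebra R T := by
  have := hS.1
  have := hT.1
  have hRT : IsOhmRushAlgebra R T := hS.2.1.trans hT.2.1
  refine ⟨Module.FaithfullyFlat.trans R S T, hRT, fun W f g hf => ?_⟩
  refine le_antisymm (Ideal.map_mono (hRT.orc_mul_le f g)) ?_
  refine Ideal.map_le_map_localization_of_forall_isPrime W fun P _ hWP => ?_
  have hfP : ¬ orc R T f ≤ P := fun hle =>
    (IsLocalization.map_algebraMap_ne_top_iff_disjoint W _ _).2 (hWP.mono_right hle) hf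
  obtain ⟨h, hh, hhP⟩ := exists_mem_orc_not_le_of_not_le hS.2.1 hT.2.1 hfP
  exact hS.map_orc_le_map_orc_mul hT P.primeCompl hh
    ((Localization.AtPrime.map_eq_top_iff_not_le P _).2 hhP)
end

section
/- Let V be a valuation domain with value group G. Then V[[X]] is an Ohm-Rush V-algebra if and only if every countable subset of positive elements of G has a greatest lower bound in G. -/
/-!
Over a valuation ring every finitely generated ideal is principal, so `f ∈ I·V[[X]]` exactly
when some `c ∈ I` divides every coefficient of `f`. Hence `orc(f)` consists of the elements
divisible by every common divisor of the coefficients, and `f ∈ orc(f)·V[[X]]` says precisely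
that the coefficients of `f` have a greatest common divisor. Since `v` turns divisibility of
nonzero elements into the order of the nonnegative cone of `G`, a greatest common divisor of a
sequence is the same as a greatest lower bound of its values; zero coefficients and values `0`
do not affect either side.
-/

def IsGCDOf {ι M : Type*} [Monoid M] (b : ι → M) (c : M) : Prop :=
  (∀ i, c ∣ b i) ∧ ∀ d, (∀ i, d ∣ b i) → d ∣ c

namespace PowerSeries

variable {R : Type*} [CommRing R]

theorem C_dvd_iff_forall_dvd_coeff (c : R) (f : R⟦X⟧) : C c ∣ f ↔ ∀ n, c ∣ coeff n f := by
  refine ⟨fun ⟨g, hg⟩ n => ⟨coeff n g, by rw [hg, coeff_C_mul]⟩, fun h => ?_⟩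
  choose g hg using h
  exact ⟨mk g, ext fun n => by rw [coeff_C_mul, coeff_mk, hg]⟩

theorem exists_C_dvd_of_mem_map_C [IsBezout R] {I : Ideal R} {f : R⟦X⟧}
    (hf : f ∈ I.map C) : ∃ c ∈ I, C c ∣ f := by
  induction hf using Submodule.span_induction with
  | mem _ h =>
    obtain ⟨c, hc, rfl⟩ := h
    exact ⟨c, hc, dvd_rfl⟩
  | zero => exact ⟨0, I.zero_mem, dvd_zero _⟩
  | add f g _ _ hf hg =>
    obtain ⟨c, hc, hcf⟩ := hf
    obtain ⟨d, hd, hdg⟩ := hg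
    have hgcd : IsBezout.gcd c d ∈ I := by
      have : Ideal.span {c, d} ≤ I := by simp [Ideal.span_insert, hc, hd]
      exact this (IsBezout.span_gcd c d ▸ Ideal.mem_span_singleton_self _)
    exact ⟨_, hgcd, dvd_add ((map_dvd C (IsBezout.gcd_dvd_left c d)).trans hcf)
      ((map_dvd C (IsBezout.gcd_dvd_right c d)).trans hdg)⟩
  | smul g f _ hf =>
    obtain ⟨c, hc, hcf⟩ := hf
    exact ⟨c, hc, hcf.mul_left g⟩

theorem mem_map_C_iff [IsBezout R] {I : Ideal R} {f : R⟦X⟧} :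
    f ∈ I.map C ↔ ∃ c ∈ I, C c ∣ f := by
  refine ⟨exists_C_dvd_of_mem_map_C, fun ⟨c, hc, g, hg⟩ => ?_⟩
  exact hg ▸ Ideal.mul_mem_right g _ (Ideal.mem_map_of_mem C hc)

theorem mem_orc_iff [IsBezout R] {c : R} {f : R⟦X⟧} :
    c ∈ orc R R⟦X⟧ f ↔ ∀ d, C d ∣ f → d ∣ c := by
  simp only [orc, Submodule.mem_sInf, Set.mem_ofPred_eq, algebraMap_eq, mem_map_C_iff]
  refine ⟨fun h d hd => Ideal.mem_span_singleton.mp (h _ ⟨d, Ideal.mem_span_singleton_self d, hd⟩),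
    fun h I ⟨d, hd, hdf⟩ => ?_⟩
  obtain ⟨e, rfl⟩ := h d hdf
  exact Ideal.mul_mem_right e I hd

theorem isOhmRushAlgebra_iff_forall_exists_isGCDOf [IsBezout R] :
    IsOhmRushAlgebra R R⟦X⟧ ↔ ∀ b : ℕ → R, ∃ c, IsGCDOf b c := by
  have key : ∀ f : R⟦X⟧, f ∈ (orc R R⟦X⟧ f).map C ↔ ∃ c, IsGCDOf (coeff · f) c := fun f => by
    simp only [mem_map_C_iff, mem_orc_iff, IsGCDOf, C_dvd_iff_forall_dvd_coeff]
    exact ⟨fun ⟨c, h, hc⟩ => ⟨c, hc, h⟩, fun ⟨c, hc, h⟩ => ⟨c, h, hc⟩⟩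
  simp only [IsOhmRushAlgebra, algebraMap_eq, key]
  exact ⟨fun h b => by simpa using h (mk b), fun h f => h _⟩

end PowerSeries

section DvdValuation

variable {ι M G : Type*} [CommMonoidWithZero M] [LinearOrder G] [Zero G]

theorem exists_isGCDOf_of_forall_ne_zero
    (h : ∀ b : ι → M, (∀ i, b i ≠ 0) → ∃ c, IsGCDOf b c) (b : ι → M) : ∃ c, IsGCDOf b c := by
  classical
  by_cases hb : ∀ i, b i = 0
  · exact ⟨0, fun i => by simp [hb i], fun _ _ => dvd_zero _⟩
  obtain ⟨j, hj⟩ := not_forall.mp hb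
  -- zero entries impose no condition on a common divisor, so they may be replaced by `b j`
  set b' : ι → M := fun i => if b i = 0 then b j else b i with hb'
  have hb'_ne : ∀ i, b' i ≠ 0 := fun i => by simp only [hb']; split_ifs <;> assumption
  have hdvd : ∀ d, (∀ i, d ∣ b' i) ↔ ∀ i, d ∣ b i := fun d =>
    ⟨fun h i => if hi : b i = 0 then hi ▸ dvd_zero d else by simpa [hb', hi] using h i,
      fun h i => by simp only [hb']; split_ifs; exacts [h j, h i]⟩
  obtain ⟨c, hc, hgcd⟩ := h b' hb'_ne
  exact ⟨c, (hdvd c).mp hc, fun d hd => hgcd d ((hdvd d).mpr hd)⟩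

theorem exists_isGLB_of_forall_nonneg
    (h : ∀ a : ι → G, (∀ i, 0 < a i) → ∃ l, IsGLB (Set.range a) l) (a : ι → G)
    (ha : ∀ i, 0 ≤ a i) : ∃ l, IsGLB (Set.range a) l := by
  by_cases h0 : ∃ i, a i = 0
  · obtain ⟨i, hi⟩ := h0
    exact ⟨0, IsLeast.isGLB ⟨⟨i, hi⟩, Set.forall_mem_range.mpr ha⟩⟩
  · exact h a fun i => (ha i).lt_of_ne' fun hi => h0 ⟨i, hi⟩

/-- The behaviour of the additive valuation of a valuation domain on its nonzero elements. -/
structure IsDvdValuation (w : M → G) : Prop where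
  dvd_iff {a b : M} : a ≠ 0 → b ≠ 0 → (a ∣ b ↔ w a ≤ w b)
  nonneg {a : M} : a ≠ 0 → 0 ≤ w a
  exists_eq {g : G} : 0 ≤ g → ∃ a ≠ 0, w a = g

namespace IsDvdValuation

variable {w : M → G} [Nonempty ι]

theorem isGCDOf_iff_isGLB (hw : IsDvdValuation w) {b : ι → M} (hb : ∀ i, b i ≠ 0) {c : M}
    (hc : c ≠ 0) :
    IsGCDOf b c ↔ IsGLB (Set.range (w ∘ b)) (w c) := by
  have hlb : ∀ {d}, d ≠ 0 → ((∀ i, d ∣ b i) ↔ w d ∈ lowerBounds (Set.range (w ∘ b))) :=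
    fun hd => by
      simp only [mem_lowerBounds, Set.forall_mem_range, Function.comp_apply, hw.dvd_iff hd (hb _)]
  refine and_congr (hlb hc) ⟨fun h g hg => ?_, fun h d hd => ?_⟩
  · rcases lt_or_ge g 0 with hg0 | hg0
    · exact hg0.le.trans (hw.nonneg hc)
    obtain ⟨d, hd, rfl⟩ := hw.exists_eq hg0
    exact (hw.dvd_iff hd hc).mp (h d ((hlb hd).mpr hg))
  · have hd0 : d ≠ 0 := ne_zero_of_dvd_ne_zero (hb (Classical.arbitrary ι)) (hd _)
    exact (hw.dvd_iff hd0 hc).mpr (h ((hlb hd0).mp hd))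

theorem forall_exists_isGCDOf_iff (hw : IsDvdValuation w) :
    (∀ b : ι → M, ∃ c, IsGCDOf b c) ↔
      ∀ a : ι → G, (∀ i, 0 < a i) → ∃ l, IsGLB (Set.range a) l := by
  constructor
  · intro h a ha
    choose b hb hba using fun i => hw.exists_eq (ha i).le
    obtain ⟨c, hc⟩ := h b
    have hc0 : c ≠ 0 := ne_zero_of_dvd_ne_zero (hb (Classical.arbitrary ι)) (hc.1 _)
    obtain rfl : w ∘ b = a := funext hba
    exact ⟨w c, (hw.isGCDOf_iff_isGLB hb hc0).mp hc⟩
  · intro h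
    refine exists_isGCDOf_of_forall_ne_zero fun b hb => ?_
    obtain ⟨l, hl⟩ := exists_isGLB_of_forall_nonneg h (w ∘ b) fun i => hw.nonneg (hb i)
    have hl0 : 0 ≤ l := hl.2 (Set.forall_mem_range.mpr fun i => hw.nonneg (hb i))
    obtain ⟨c, hc, rfl⟩ := hw.exists_eq hl0
    exact ⟨c, (hw.isGCDOf_iff_isGLB hb hc).mpr hl⟩

end IsDvdValuation

end DvdValuation

section FractionRing

variable {V K G : Type*} [CommRing V] [Field K] [Algebra V K] [IsFractionRing V K]
  [AddCommGroup G] [LinearOrder G] [IsOrderedAddMonoid G]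

theorem IsFractionRing.dvd_iff_exists_algebraMap_eq_div {a b : V} (ha : a ≠ 0) :
    a ∣ b ↔ ∃ t : V, algebraMap V K t = algebraMap V K b / algebraMap V K a := by
  have ha' : algebraMap V K a ≠ 0 := IsFractionRing.to_map_eq_zero_iff.not.mpr ha
  simp only [eq_div_iff ha', ← map_mul, (IsFractionRing.injective V K).eq_iff, dvd_def,
    mul_comm, eq_comm]

open Classical in
/-- The restriction of `v` to `V`, with the junk value `0` at `a = 0`. -/
noncomputable def valueOf (v : Kˣ → G) (a : V) : G :=
  if h : a = 0 then 0
  else v (Units.mk0 (algebraMap V K a) (IsFractionRing.to_map_eq_zero_iff.not.mpr h))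

theorem isDvdValuation_valueOf (v : Kˣ → G) (hsurj : Function.Surjective v)
    (hmul : ∀ x y : Kˣ, v (x * y) = v x + v y)
    (hord : ∀ x : Kˣ, 0 ≤ v x ↔ ∃ a : V, algebraMap V K a = (x : K)) :
    IsDvdValuation (valueOf v : V → G) := by
  have hdiv : ∀ x y : Kˣ, v (y / x) = v y - v x := fun x y =>
    eq_sub_of_add_eq (by rw [← hmul, div_mul_cancel])
  have hval : ∀ {a : V} (ha : a ≠ 0), valueOf v a =
      v (Units.mk0 (algebraMap V K a) (IsFractionRing.to_map_eq_zero_iff.not.mpr ha)) :=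
    fun ha => dif_neg ha
  refine ⟨fun {a b} ha hb => ?_, fun {a} ha => ?_, fun {g} hg => ?_⟩
  · rw [IsFractionRing.dvd_iff_exists_algebraMap_eq_div (K := K) ha, hval ha, hval hb,
      ← sub_nonneg, ← hdiv, hord]
    simp
  · rw [hval ha, hord]
    exact ⟨a, rfl⟩
  · obtain ⟨x, rfl⟩ := hsurj g
    obtain ⟨a, hax⟩ := (hord x).mp hg
    have ha : a ≠ 0 := by rintro rfl; exact x.ne_zero (by simpa using hax.symm)
    exact ⟨a, ha, by rw [hval ha]; congr; exact Units.ext hax⟩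

end FractionRing

/-- Let `V` be a valuation domain with value group `G` (presented as a linearly ordered
abelian group together with a surjective homomorphic valuation `v` on the units of the
fraction field, where the nonnegative values are exactly the values of nonzero elements of
`V`).  Then `V[[X]]` is an Ohm-Rush `V`-algebra if and only if every countable set of
positive elements of `G` has a greatest lower bound in `G`. -/
theorem powerSeries_isOhmRushAlgebra_iff_countable_glb
    (V : Type*) [CommRing V] [IsDomain V] [ValuationRing V]
    (G : Type*) [AddCommGroup G] [LinearOrder G] [IsOrderedAddMonoid G]
    (v : (FractionRing V)ˣ → G)
    (hsurj : Function.Surjective v)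
    (hmul : ∀ x y : (FractionRing V)ˣ, v (x * y) = v x + v y)
    (hord : ∀ x : (FractionRing V)ˣ,
      0 ≤ v x ↔ ∃ a : V, algebraMap V (FractionRing V) a = (x : FractionRing V)) :
    IsOhmRushAlgebra V (PowerSeries V) ↔
      ∀ a : ℕ → G, (∀ n, 0 < a n) → ∃ l : G, IsGLB (Set.range a) l := by
  rw [PowerSeries.isOhmRushAlgebra_iff_forall_exists_isGCDOf]
  exact (isDvdValuation_valueOf v hsurj hmul hord).forall_exists_isGCDOf_iff
end

section
/- Let V be a valuation domain of Krull dimension at least 2. Then V[[X]] is not an Ohm-Rush V-algebra. -/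
/-!
Choose primes `⊥ < P < Q` of `V`, a nonzero `p ∈ P` and `q ∈ Q \ P`. In a valuation ring
`q ^ n ∣ p` for every `n`, so there is a nonzero power series `f = ∑ (p / q ^ n) X ^ n` whose
coefficients satisfy `aₙ = q * aₙ₊₁`. Since `V` is Bézout, the Ohm-Rush property produces a
constant `c ∈ orc f` dividing `f`, and every constant dividing `f` divides `c`. But the
recursion shows that `c * q` also divides `f`, so `c * q ∣ c` and `q` would be a unit.
-/

theorem Ideal.exists_fg_le_and_mem_map {R S : Type*} [CommSemiring R] [Semiring S]
    (φ : R →+* S) {I : Ideal R} {x : S} (hx : x ∈ I.map φ) :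
    ∃ J ≤ I, J.FG ∧ x ∈ J.map φ := by
  classical
  obtain ⟨T, hTI, hxT⟩ := Submodule.mem_span_finite_of_mem_span hx
  obtain ⟨s, hsI, rfl⟩ := Finset.subset_set_image_iff.mp hTI
  refine ⟨span s, span_le.mpr hsI, ⟨s, rfl⟩, ?_⟩
  rwa [map_span, ← Finset.coe_image]

section OhmRush

variable {R S : Type*} [CommRing R] [CommRing S] [Algebra R S]

theorem mem_map_span_singleton_iff {c : R} {f : S} :
    f ∈ (Ideal.span {c}).map (algebraMap R S) ↔ algebraMap R S c ∣ f := by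
  rw [Ideal.map_span, Set.image_singleton, Ideal.mem_span_singleton]

theorem orc_le_of_mem_map {I : Ideal R} {f : S} (hf : f ∈ I.map (algebraMap R S)) :
    orc R S f ≤ I :=
  sInf_le hf

theorem dvd_of_mem_orc_of_algebraMap_dvd {c d : R} {f : S} (hc : c ∈ orc R S f)
    (hd : algebraMap R S d ∣ f) : d ∣ c :=
  Ideal.mem_span_singleton.mp (orc_le_of_mem_map (mem_map_span_singleton_iff.mpr hd) hc)

theorem IsOhmRushAlgebra.exists_mem_orc_algebraMap_dvd [IsBezout R] (h : IsOhmRushAlgebra R S)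
    (f : S) : ∃ c ∈ orc R S f, algebraMap R S c ∣ f := by
  obtain ⟨J, hJ, hJfg, hfJ⟩ := Ideal.exists_fg_le_and_mem_map _ (h f)
  obtain ⟨c, rfl⟩ := (IsBezout.isPrincipal_of_FG J hJfg).principal
  exact ⟨c, hJ (Ideal.mem_span_singleton_self c), mem_map_span_singleton_iff.mp hfJ⟩

end OhmRush

theorem exists_isPrime_bot_lt_lt_of_two_le_ringKrullDim {R : Type*} [CommRing R]
    (h : 2 ≤ ringKrullDim R) : ∃ P Q : Ideal R, P.IsPrime ∧ Q.IsPrime ∧ ⊥ < P ∧ P < Q := by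
  obtain ⟨l, hl⟩ := (Order.le_krullDim_iff (n := 2)).mp h
  have h01 : l ⟨0, by omega⟩ < l ⟨1, by omega⟩ := l.strictMono (by simp [Fin.lt_def])
  have h12 : l ⟨1, by omega⟩ < l ⟨2, by omega⟩ := l.strictMono (by simp [Fin.lt_def])
  exact ⟨_, _, (l _).isPrime, (l _).isPrime, bot_le.trans_lt h01, h12⟩

theorem PreValuationRing.pow_dvd_of_mem_of_notMem {V : Type*} [CommRing V]
    [PreValuationRing V] {P : Ideal V} [P.IsPrime] {p q : V} (hp : p ∈ P) (hq : q ∉ P) (n : ℕ) :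
    q ^ n ∣ p := by
  obtain ⟨c, hc | hc⟩ := PreValuationRing.cond (q ^ n) p
  · exact ⟨c, hc.symm⟩
  · exact absurd (‹P.IsPrime›.mem_of_pow_mem n (hc ▸ P.mul_mem_right c hp)) hq

theorem PreValuationRing.exists_ne_zero_not_isUnit_forall_pow_dvd {V : Type*} [CommRing V]
    [PreValuationRing V] (h : 2 ≤ ringKrullDim V) :
    ∃ p q : V, p ≠ 0 ∧ ¬IsUnit q ∧ ∀ n, q ^ n ∣ p := by
  obtain ⟨P, Q, hP, hQ, hbot, hPQ⟩ := exists_isPrime_bot_lt_lt_of_two_le_ringKrullDim h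
  obtain ⟨p, hpP, hp0⟩ := SetLike.exists_of_lt hbot
  obtain ⟨q, hqQ, hqP⟩ := SetLike.exists_of_lt hPQ
  exact ⟨p, q, hp0, fun hu => hQ.ne_top (Q.eq_top_of_isUnit_mem hqQ hu),
    pow_dvd_of_mem_of_notMem hpP hqP⟩

namespace PowerSeries

theorem exists_ne_zero_coeff_eq_mul_coeff_succ {R : Type*} [CommRing R] [IsLeftCancelMulZero R]
    {p q : R} (hp : p ≠ 0) (hdvd : ∀ n, q ^ n ∣ p) :
    ∃ f : R⟦X⟧, f ≠ 0 ∧ ∀ n, coeff n f = q * coeff (n + 1) f := by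
  choose a ha using hdvd
  have hq : q ≠ 0 := by rintro rfl; simp [ha 1] at hp
  refine ⟨mk a, fun hf => hp ?_, fun n => ?_⟩
  · simpa [ha 0] using congr_arg (coeff 0) hf
  · rw [coeff_mk, coeff_mk]
    refine mul_left_cancel₀ (pow_ne_zero n hq) ?_
    rw [← ha n, ← mul_assoc, ← pow_succ, ← ha (n + 1)]

theorem C_mul_dvd_of_C_dvd {R : Type*} [CommRing R] {f : R⟦X⟧} {q c : R}
    (hf : ∀ n, coeff n f = q * coeff (n + 1) f) (hc : C c ∣ f) : C (c * q) ∣ f := by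
  obtain ⟨g, rfl⟩ := hc
  refine ⟨mk fun n => coeff (n + 1) g, ext fun n => ?_⟩
  rw [hf, coeff_C_mul, coeff_C_mul, coeff_mk, mul_left_comm, mul_assoc]

end PowerSeries

/-- If `V` is a valuation domain of Krull dimension at least 2, then `V[[X]]` is not an
Ohm-Rush `V`-algebra. -/
theorem powerSeries_not_isOhmRushAlgebra_of_two_le_krullDim
    (V : Type*) [CommRing V] [IsDomain V] [ValuationRing V]
    (hdim : 2 ≤ ringKrullDim V) :
    ¬ IsOhmRushAlgebra V (PowerSeries V) := by
  intro hOR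
  obtain ⟨p, q, hp, hq, hdvd⟩ := PreValuationRing.exists_ne_zero_not_isUnit_forall_pow_dvd hdim
  obtain ⟨f, hf, hrec⟩ := PowerSeries.exists_ne_zero_coeff_eq_mul_coeff_succ hp hdvd
  obtain ⟨c, hc, hcf⟩ := hOR.exists_mem_orc_algebraMap_dvd f
  have hc0 : c ≠ 0 := by
    rintro rfl
    exact hf (by simpa using hcf)
  have hcq : c * q ∣ c :=
    dvd_of_mem_orc_of_algebraMap_dvd hc (PowerSeries.C_mul_dvd_of_C_dvd hrec hcf)
  exact hq (isUnit_of_dvd_one ((mul_dvd_mul_iff_left hc0).mp (by rwa [mul_one])))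
end

section
/- Let R be a commutative ring and S a commutative R-algebra. If S is a content R-algebra, then S is a semicontent R-algebra; and if S is a semicontent R-algebra, then S is a weak content R-algebra. -/
/-! A content algebra is semicontent because the Dedekind–Mertens identity
`c(f)^n c(g) = c(f)^(n-1) c(fg)` collapses to `c(g) = c(fg)` after any base change in which
`c(f)` becomes the unit ideal. A semicontent algebra is weak content because, localizing at a
prime `P` containing `c(fg)`, the semicontent condition shows that `P` cannot avoid both
`c(f)` and `c(g)`; hence `c(f) c(g)` lies in every prime over `c(fg)`. -/

namespace Ideal

variable {R : Type*} [CommRing R]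

theorem map_eq_map_of_pow_mul_eq_pow_sub_one_mul {T : Type*} [CommRing T] (φ : R →+* T)
    {I J K : Ideal R} {n : ℕ} (h : I ^ n * J = I ^ (n - 1) * K) (hI : I.map φ = ⊤) :
    K.map φ = J.map φ := by
  have h' := congrArg (Ideal.map φ) h
  simp only [Ideal.map_mul, Ideal.map_pow, hI, Ideal.top_pow, Ideal.top_mul] at h'
  exact h'.symm

theorem mul_le_radical_of_forall_isPrime {I J K : Ideal R}
    (h : ∀ P : Ideal R, P.IsPrime → K ≤ P → I ≤ P ∨ J ≤ P) : I * J ≤ K.radical := by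
  rw [Ideal.radical_eq_sInf]
  exact le_sInf fun P ⟨hKP, hP⟩ => hP.mul_le.mpr (h P hP hKP)

end Ideal

section ContentAlgebras

variable {R S : Type*} [CommRing R] [CommRing S] [Algebra R S]

theorem IsContentAlgebra.isSemicontentAlgebra (h : IsContentAlgebra R S) :
    IsSemicontentAlgebra R S := by
  obtain ⟨hflat, hohmRush, hdm⟩ := h
  refine ⟨hflat, hohmRush, fun W f g hf => ?_⟩
  obtain ⟨n, -, hn⟩ := hdm f g
  exact Ideal.map_eq_map_of_pow_mul_eq_pow_sub_one_mul _ hn hf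

theorem IsSemicontentAlgebra.orc_mul_not_le (h : IsSemicontentAlgebra R S) {P : Ideal R}
    [P.IsPrime] {f g : S} (hf : ¬ orc R S f ≤ P) (hg : ¬ orc R S g ≤ P) :
    ¬ orc R S (f * g) ≤ P := by
  intro hfg
  have hloc := h.2.2 P.primeCompl f g
    (IsLocalization.AtPrime.map_eq_top_of_not_le (Localization.AtPrime P) hf)
  rw [IsLocalization.AtPrime.map_eq_top_of_not_le (Localization.AtPrime P) hg] at hloc
  have hle := Ideal.map_mono (f := algebraMap R (Localization.AtPrime P)) hfg
  rw [hloc, Localization.AtPrime.map_eq_maximalIdeal, top_le_iff] at hle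
  exact (IsLocalRing.maximalIdeal.isMaximal _).ne_top hle

theorem IsSemicontentAlgebra.isWeakContentAlgebra (h : IsSemicontentAlgebra R S) :
    IsWeakContentAlgebra R S := by
  refine ⟨h.2.1, fun f g => Ideal.mul_le_radical_of_forall_isPrime fun P hP hfgP => ?_⟩
  by_contra! hnot
  exact h.orc_mul_not_le hnot.1 hnot.2 hfgP

end ContentAlgebras

/-- Content algebra implies semicontent algebra, and semicontent algebra implies weak
content algebra. -/
theorem isContentAlgebra_implications (R S : Type*) [CommRing R] [CommRing S] [Algebra R S] :
    (IsContentAlgebra R S → IsSemicontentAlgebra R S) ∧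
    (IsSemicontentAlgebra R S → IsWeakContentAlgebra R S) :=
  ⟨IsContentAlgebra.isSemicontentAlgebra, IsSemicontentAlgebra.isWeakContentAlgebra⟩
end

section
/- Let S be a faithfully flat Ohm-Rush R-algebra. Then S is a semicontent R-algebra if and only if for every g ∈ S, every prime ideal P of R, and every f ∈ S with f ∉ PS, there exists t ∈ R \ P such that t·orc(g) ⊆ orc(fg). -/
/-! Write `C = (orc(fg) : orc(g))`. As `orc g` is finitely generated, `orc(g) R_W ⊆ orc(fg) R_W`
holds exactly when `C` meets `W`. So the semicontent condition for `f, g` says that every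
multiplicative set meeting `orc f` meets `C`, and the prime criterion says that every prime
containing `C` contains `orc f`; both mean `orc f ⊆ √C`. -/

namespace Ideal

variable {R : Type*} [CommRing R]

theorem le_radical_iff_forall_submonoid {I J : Ideal R} :
    I ≤ J.radical ↔ ∀ W : Submonoid R, ¬Disjoint (W : Set R) I → ¬Disjoint (W : Set R) J := by
  refine ⟨fun h W hW => ?_, fun h x hx => ?_⟩
  · obtain ⟨x, hxW, hxI⟩ := Set.not_disjoint_iff.mp hW
    obtain ⟨n, hn⟩ := h hxI
    exact Set.not_disjoint_iff.mpr ⟨x ^ n, pow_mem hxW n, hn⟩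
  · obtain ⟨_, ⟨n, rfl⟩, hn⟩ :=
      Set.not_disjoint_iff.mp (h (Submonoid.powers x) (Set.not_disjoint_iff.mpr
        ⟨x, Submonoid.mem_powers x, hx⟩))
    exact ⟨n, hn⟩

theorem le_radical_iff_forall_isPrime {I J : Ideal R} :
    I ≤ J.radical ↔ ∀ P : Ideal R, P.IsPrime → J ≤ P → I ≤ P := by
  simp only [radical_eq_sInf, le_sInf_iff, Set.mem_ofPred_eq, and_imp]
  exact ⟨fun h P hP hJP => h P hJP hP, fun h P hJP hP => h P hP hJP⟩

theorem mem_colon_iff_span_singleton_mul_le {t : R} {I J : Ideal R} :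
    t ∈ J.colon (I : Set R) ↔ span {t} * I ≤ J := by
  rw [Submodule.mem_colon, span_singleton_mul_le_iff]
  rfl

end Ideal

namespace IsLocalization

variable {R : Type*} [CommRing R] (M : Submonoid R) {T : Type*} [CommRing T] [Algebra R T]
  [IsLocalization M T]

theorem map_le_map_iff_of_fg {I J : Ideal R} (hI : I.FG) :
    I.map (algebraMap R T) ≤ J.map (algebraMap R T) ↔
      ¬Disjoint (M : Set R) (J.colon (I : Set R)) := by
  refine ⟨fun h => ?_, fun h => ?_⟩
  · induction I, hI using Submodule.fg_induction with
    | singleton x =>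
      have hx := h (Ideal.mem_map_of_mem _ (Submodule.mem_span_singleton_self x))
      obtain ⟨m, hm, hmx⟩ := (algebraMap_mem_map_algebraMap_iff M (S := T) J x).mp hx
      rw [Submodule.colon_span, Set.not_disjoint_iff]
      exact ⟨m, hm, Submodule.mem_colon_singleton.mpr hmx⟩
    | sup I₁ I₂ _ _ ih₁ ih₂ =>
      rw [Ideal.map_sup, sup_le_iff] at h
      obtain ⟨m₁, hm₁, hm₁I⟩ := Set.not_disjoint_iff.mp (ih₁ h.1)
      obtain ⟨m₂, hm₂, hm₂I⟩ := Set.not_disjoint_iff.mp (ih₂ h.2)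
      rw [← Submodule.span_eq I₁, ← Submodule.span_eq I₂, ← Submodule.span_union,
        Submodule.colon_span, Submodule.colon_union, Set.not_disjoint_iff]
      exact ⟨m₁ * m₂, M.mul_mem hm₁ hm₂,
        Ideal.mul_mem_right _ _ hm₁I, Ideal.mul_mem_left _ _ hm₂I⟩
  · obtain ⟨m, hm, hmI⟩ := Set.not_disjoint_iff.mp h
    rw [Ideal.map_le_iff_le_comap]
    intro x hx
    exact (algebraMap_mem_map_algebraMap_iff M (S := T) J x).mpr
      ⟨m, hm, Submodule.mem_colon.mp hmI x hx⟩

end IsLocalization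

theorem orc_le_of_mem {R S : Type*} [CommRing R] [CommRing S] [Algebra R S] {f : S}
    {I : Ideal R} (h : f ∈ I.map (algebraMap R S)) : orc R S f ≤ I :=
  sInf_le h

namespace IsOhmRushAlgebra

variable {R S : Type*} [CommRing R] [CommRing S] [Algebra R S]

theorem orc_le_iff (hor : IsOhmRushAlgebra R S) {f : S} {I : Ideal R} :
    orc R S f ≤ I ↔ f ∈ I.map (algebraMap R S) :=
  ⟨fun h => Ideal.map_mono h (hor f), orc_le_of_mem⟩

theorem orc_mul_le_s11 (hor : IsOhmRushAlgebra R S) (f g : S) : orc R S (f * g) ≤ orc R S g :=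
  orc_le_of_mem (Ideal.mul_mem_left _ f (hor g))

-- `g` already lies in `J S` for a finitely generated `J ≤ orc g`, and then `orc g ≤ J`.
theorem orc_fg (hor : IsOhmRushAlgebra R S) (g : S) : (orc R S g).FG := by
  classical
  obtain ⟨T, hT, hgT⟩ := Submodule.mem_span_finite_of_mem_span (hor g)
  obtain ⟨A, hA, rfl⟩ := Finset.subset_set_image_iff.mp hT
  have hgA : g ∈ (Ideal.span (A : Set R)).map (algebraMap R S) := by
    rwa [Ideal.map_span, ← Finset.coe_image]
  exact ⟨A, le_antisymm (Ideal.span_le.mpr hA) (orc_le_of_mem hgA)⟩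

theorem map_orc_mul_eq_iff (hor : IsOhmRushAlgebra R S) (W : Submonoid R) (f g : S) :
    (orc R S (f * g)).map (algebraMap R (Localization W)) =
        (orc R S g).map (algebraMap R (Localization W)) ↔
      ¬Disjoint (W : Set R) ((orc R S (f * g)).colon (orc R S g : Set R)) := by
  rw [le_antisymm_iff, and_iff_right (Ideal.map_mono (hor.orc_mul_le_s11 f g)),
    IsLocalization.map_le_map_iff_of_fg W (hor.orc_fg g)]

theorem forall_localization_iff_le_radical (hor : IsOhmRushAlgebra R S) (f g : S) :
    (∀ W : Submonoid R, (orc R S f).map (algebraMap R (Localization W)) = ⊤ →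
        (orc R S (f * g)).map (algebraMap R (Localization W)) =
          (orc R S g).map (algebraMap R (Localization W))) ↔
      orc R S f ≤ ((orc R S (f * g)).colon (orc R S g : Set R)).radical := by
  refine Iff.trans (forall_congr' fun W => ?_) Ideal.le_radical_iff_forall_submonoid.symm
  rw [hor.map_orc_mul_eq_iff, ← not_ne_iff, IsLocalization.map_algebraMap_ne_top_iff_disjoint W]

theorem forall_prime_iff_le_radical (hor : IsOhmRushAlgebra R S) (f g : S) :
    (∀ P : Ideal R, P.IsPrime → f ∉ P.map (algebraMap R S) →
        ∃ t : R, t ∉ P ∧ Ideal.span {t} * orc R S g ≤ orc R S (f * g)) ↔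
      orc R S f ≤ ((orc R S (f * g)).colon (orc R S g : Set R)).radical := by
  simp only [Ideal.le_radical_iff_forall_isPrime, ← hor.orc_le_iff,
    ← Ideal.mem_colon_iff_span_singleton_mul_le]
  refine forall₂_congr fun P _ => ?_
  rw [not_imp_comm]
  refine imp_congr_left ?_
  simp only [not_exists, not_and, not_imp_not]
  rfl

end IsOhmRushAlgebra

/-- A faithfully flat Ohm-Rush `R`-algebra `S` is a semicontent `R`-algebra if and only if
for each `g ∈ S`, each prime ideal `P` of `R`, and each `f ∈ S \ PS`, there exists
`t ∈ R \ P` with `t·orc(g) ⊆ orc(fg)`. -/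
theorem isSemicontentAlgebra_iff (R S : Type*) [CommRing R] [CommRing S] [Algebra R S]
    (hff : Module.FaithfullyFlat R S) (hor : IsOhmRushAlgebra R S) :
    IsSemicontentAlgebra R S ↔
      ∀ (g : S) (P : Ideal R), P.IsPrime → ∀ f : S, f ∉ P.map (algebraMap R S) →
        ∃ t : R, t ∉ P ∧ Ideal.span {t} * orc R S g ≤ orc R S (f * g) := by
  calc IsSemicontentAlgebra R S
      ↔ ∀ f g : S, orc R S f ≤ ((orc R S (f * g)).colon (orc R S g : Set R)).radical := by
        simp only [IsSemicontentAlgebra, hff, hor, true_and,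
          ← hor.forall_localization_iff_le_radical]
        exact ⟨fun h f g W => h W f g, fun h W f g => h f g W⟩
    _ ↔ _ := by
        simp only [← hor.forall_prime_iff_le_radical]
        exact ⟨fun h g P hP f => h f g P hP, fun h f g P hP => h g P hP f⟩
end

section
/- Let S be a semicontent R-algebra and let V be a multiplicatively closed subset of S such that orc(a) = R for all a ∈ V. Then the localization S_V is a semicontent R-algebra. -/
/-!
Every `a ∈ V` has content `R`, so the semicontent condition (with `W` trivial) gives
`orc(a g) = orc(g)` for all `g`; with the Ohm-Rush property this makes `a g ∈ IS` equivalent to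
`g ∈ IS`. Hence `s / v ∈ I S_V` iff `s ∈ IS`, so `orc(s / v) = orc(s)`, and every defining
property of a semicontent algebra passes from `S` to `S_V`.
-/

open IsLocalization

section Content

variable {R S : Type*} [CommRing R] [CommRing S] [Algebra R S]

lemma orc_eq_of_forall_mem_map_iff {T : Type*} [CommRing T] [Algebra R T] {f : S} {g : T}
    (hfg : ∀ I : Ideal R, f ∈ I.map (algebraMap R S) ↔ g ∈ I.map (algebraMap R T)) :
    orc R S f = orc R T g :=
  congrArg sInf (Set.ext hfg)

lemma IsOhmRushAlgebra.mem_map_iff_orc_le (h : IsOhmRushAlgebra R S) {f : S} {I : Ideal R} :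
    f ∈ I.map (algebraMap R S) ↔ orc R S f ≤ I :=
  ⟨fun hf => sInf_le hf, fun hle => Ideal.map_mono hle (h f)⟩

lemma algebraMap_localization_bot_bijective :
    Function.Bijective (algebraMap R (Localization (⊥ : Submonoid R))) :=
  (atUnits R ⊥ bot_le).bijective

namespace IsSemicontentAlgebra

variable (h : IsSemicontentAlgebra R S)
include h

lemma orc_mul_of_orc_eq_top {f : S} (hf : orc R S f = ⊤) (g : S) :
    orc R S (f * g) = orc R S g := by
  have hloc := h.2.2 ⊥ f g (by rw [hf, Ideal.map_top])
  simpa only [Ideal.comap_map_of_bijective _ algebraMap_localization_bot_bijective] using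
    congrArg (Ideal.comap (algebraMap R _)) hloc

lemma mem_map_of_mul_mem_map {f g : S} (hf : orc R S f = ⊤) {I : Ideal R}
    (hfg : f * g ∈ I.map (algebraMap R S)) : g ∈ I.map (algebraMap R S) := by
  rw [h.2.1.mem_map_iff_orc_le, ← h.orc_mul_of_orc_eq_top hf]
  exact sInf_le hfg

variable (V : Submonoid S) (hV : ∀ a ∈ V, orc R S a = ⊤) {SV : Type*} [CommRing SV]
  [Algebra S SV] [IsLocalization V SV] [Algebra R SV] [IsScalarTower R S SV]
include hV

lemma mk'_mem_map_algebraMap_iff (I : Ideal R) (s : S) (v : V) :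
    mk' SV s v ∈ I.map (algebraMap R SV) ↔ s ∈ I.map (algebraMap R S) := by
  rw [IsScalarTower.algebraMap_eq R S SV, ← Ideal.map_map,
    IsLocalization.mk'_mem_map_algebraMap_iff V]
  exact ⟨fun ⟨u, hu, hus⟩ => h.mem_map_of_mul_mem_map (hV u hu) hus,
    fun hs => ⟨1, V.one_mem, by rwa [one_mul]⟩⟩

lemma orc_mk' (s : S) (v : V) : orc R SV (mk' SV s v) = orc R S s :=
  orc_eq_of_forall_mem_map_iff fun I => h.mk'_mem_map_algebraMap_iff V hV I s v

lemma isOhmRushAlgebra_of_isLocalization : IsOhmRushAlgebra R SV := by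
  intro x
  obtain ⟨⟨s, v⟩, rfl⟩ := mk'_surjective V x
  rw [h.orc_mk' V hV, h.mk'_mem_map_algebraMap_iff V hV]
  exact h.2.1 s

lemma faithfullyFlat_of_isLocalization : Module.FaithfullyFlat R SV := by
  have := h.1
  have : Module.Flat S SV := IsLocalization.flat SV V
  refine (Module.FaithfullyFlat.iff_flat_and_ideal_smul_eq_top R SV).2
    ⟨.trans R S SV, fun I hI => ?_⟩
  have hone : (1 : S) ∈ I.map (algebraMap R S) := by
    rw [← h.mk'_mem_map_algebraMap_iff V hV (SV := SV) I 1 1, mk'_one, map_one,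
      ← Submodule.restrictScalars_mem R, ← Ideal.smul_top_eq_map, hI]
    trivial
  exact Ideal.map_injective_of_faithfullyFlat (B := S)
    (by rw [(Ideal.eq_top_iff_one _).2 hone, Ideal.map_top])

end IsSemicontentAlgebra

end Content

/-- If `S` is a semicontent `R`-algebra and `V` is a multiplicatively closed subset of `S`
with `orc(a) = R` for all `a ∈ V`, then the localization `S_V` is a semicontent
`R`-algebra. -/
theorem isSemicontentAlgebra_localization_at_content_one
    (R S : Type*) [CommRing R] [CommRing S] [Algebra R S]
    (V : Submonoid S) (hV : ∀ a ∈ V, orc R S a = ⊤)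
    (SV : Type*) [CommRing SV] [Algebra S SV] [IsLocalization V SV]
    [Algebra R SV] [IsScalarTower R S SV]
    (h : IsSemicontentAlgebra R S) : IsSemicontentAlgebra R SV := by
  refine ⟨h.faithfullyFlat_of_isLocalization V hV (SV := SV),
    h.isOhmRushAlgebra_of_isLocalization V hV, ?_⟩
  intro W f g hf
  obtain ⟨⟨s, v⟩, rfl⟩ := mk'_surjective V f
  obtain ⟨⟨t, w⟩, rfl⟩ := mk'_surjective V g
  rw [h.orc_mk' V hV] at hf
  rw [← mk'_mul, h.orc_mk' V hV, h.orc_mk' V hV]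
  exact h.2.2 W s t hf
end

section
/- Let R → S → T be commutative rings and homomorphisms such that S is an Ohm-Rush R-algebra and T is an Ohm-Rush S-algebra. Then T is an Ohm-Rush R-algebra, and for every f ∈ T, orc_{S/R}(orc_{T/S}(f)) = orc_{T/R}(f), where for an ideal J of S, orc_{S/R}(J) := ⋂{I : I an ideal of R with J ⊆ IS}. -/
/-- The Ohm-Rush content of an ideal `J` of the `R`-algebra `S`:
the intersection of all ideals `I` of `R` with `J ⊆ IS`. -/
def orcIdeal (R S : Type*) [CommRing R] [CommRing S] [Algebra R S] (J : Ideal S) : Ideal R :=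
  sInf {I : Ideal R | J ≤ I.map (algebraMap R S)}

/-- If `S` is an Ohm-Rush `R`-algebra and `T` is an Ohm-Rush `S`-algebra, then `T` is an
Ohm-Rush `R`-algebra and `orc_{S/R}(orc_{T/S}(f)) = orc_{T/R}(f)` for all `f ∈ T`. -/
theorem isOhmRushAlgebra_trans_and_orc_comp (R S T : Type*) [CommRing R] [CommRing S]
    [CommRing T] [Algebra R S] [Algebra S T] [Algebra R T] [IsScalarTower R S T]
    (hS : IsOhmRushAlgebra R S) (hT : IsOhmRushAlgebra S T) :
    IsOhmRushAlgebra R T ∧ ∀ f : T, orcIdeal R S (orc S T f) = orc R T f := by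
  have hmm : ∀ I : Ideal R,
      (I.map (algebraMap R S)).map (algebraMap S T) = I.map (algebraMap R T) := by
    intro I
    rw [Ideal.map_map, ← IsScalarTower.algebraMap_eq]
  have key : ∀ f : T, orcIdeal R S (orc S T f) = orc R T f ∧
      f ∈ (orc R T f).map (algebraMap R T) := by
    intro f
    have hA : orc S T f ≤ (orcIdeal R S (orc S T f)).map (algebraMap R S) := by
      intro g hg
      have h1 : orc R S g ≤ orcIdeal R S (orc S T f) := by
        apply le_sInf
        intro I hI
        exact sInf_le (hI hg)
      exact Ideal.map_mono h1 (hS g)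
    have hmem : f ∈ (orcIdeal R S (orc S T f)).map (algebraMap R T) := by
      rw [← hmm]
      exact Ideal.map_mono hA (hT f)
    have h2 : orc R T f ≤ orcIdeal R S (orc S T f) := sInf_le hmem
    have h3 : orcIdeal R S (orc S T f) ≤ orc R T f := by
      apply le_sInf
      intro I hI
      apply sInf_le
      show orc S T f ≤ I.map (algebraMap R S)
      apply sInf_le
      show f ∈ (I.map (algebraMap R S)).map (algebraMap S T)
      rw [hmm]
      exact hI
    have heq := le_antisymm h3 h2
    exact ⟨heq, heq ▸ hmem⟩
  exact ⟨fun f => (key f).2, fun f => (key f).1⟩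
end

section
/- Let R be a commutative ring and f ∈ R[[X]]. If J is a finitely generated ideal of R, then f ∈ J·R[[X]] if and only if c(f) ⊆ J. Consequently, the Ohm-Rush content orc(f) of f as an element of the R-algebra R[[X]] equals the intersection of all finitely generated ideals of R containing c(f); in particular c(f) ⊆ orc(f), with equality when R is Noetherian. -/
/-- The `common-sense' content of a power series: the ideal generated by its
coefficients. -/
def psContent (R : Type*) [CommRing R] (f : PowerSeries R) : Ideal R :=
  Ideal.span (Set.range fun n => PowerSeries.coeff (R := R) n f)

namespace PowerSeries

variable {R : Type*} [CommRing R]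

theorem coeff_mem_of_mem_map_C {I : Ideal R} {f : R⟦X⟧} (hf : f ∈ I.map C) (n : ℕ) :
    coeff n f ∈ I := by
  have hker : I.map C ≤ RingHom.ker (map (Ideal.Quotient.mk I)) :=
    Ideal.map_le_iff_le_comap.2 fun a ha => by simp [Ideal.Quotient.eq_zero_iff_mem.2 ha]
  rw [← Ideal.Quotient.eq_zero_iff_mem, ← coeff_map, hker hf, map_zero]

theorem mem_map_C_of_forall_coeff_mem {J : Ideal R} (hJ : J.FG) {f : R⟦X⟧}
    (hf : ∀ n, coeff n f ∈ J) : f ∈ J.map C := by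
  obtain ⟨s, rfl⟩ := hJ
  choose c hc using fun n => Submodule.mem_span_finset.1 (hf n)
  have hsum : f = ∑ i ∈ s, C i * mk fun n => c n i := by
    ext n
    simp only [map_sum, coeff_C_mul, coeff_mk, ← (hc n).2, smul_eq_mul, mul_comm]
  rw [hsum]
  exact Ideal.sum_mem _ fun i hi => Ideal.mul_mem_right _ _ <|
    Ideal.mem_map_of_mem _ (Ideal.subset_span hi)

end PowerSeries

section

open PowerSeries

variable {R : Type*} [CommRing R]

theorem psContent_le_iff {J : Ideal R} {f : R⟦X⟧} :
    psContent R f ≤ J ↔ ∀ n, coeff n f ∈ J := by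
  rw [psContent, Ideal.span_le, Set.range_subset_iff]
  rfl

theorem psContent_le_of_mem_map {I : Ideal R} {f : R⟦X⟧}
    (hf : f ∈ I.map (algebraMap R R⟦X⟧)) : psContent R f ≤ I :=
  psContent_le_iff.2 (coeff_mem_of_mem_map_C hf)

theorem mem_map_iff_psContent_le {J : Ideal R} (hJ : J.FG) {f : R⟦X⟧} :
    f ∈ J.map (algebraMap R R⟦X⟧) ↔ psContent R f ≤ J :=
  ⟨psContent_le_of_mem_map, fun h => mem_map_C_of_forall_coeff_mem hJ (psContent_le_iff.1 h)⟩

theorem orc_powerSeries_eq_sInf_fg (f : R⟦X⟧) :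
    orc R R⟦X⟧ f = sInf {J : Ideal R | J.FG ∧ psContent R f ≤ J} := by
  refine le_antisymm (sInf_le_sInf fun J hJ => (mem_map_iff_psContent_le hJ.1).2 hJ.2) ?_
  refine le_sInf fun I hI => ?_
  obtain ⟨J, hJI, hJ, hfJ⟩ := Ideal.exists_fg_le_and_mem_map _ hI
  exact le_trans (sInf_le ⟨hJ, psContent_le_of_mem_map hfJ⟩) hJI

end

/-- For `f ∈ R[[X]]` and a finitely generated ideal `J` of `R`, `f ∈ J·R[[X]]` iff
`c(f) ⊆ J`.  Hence `orc(f)` is the intersection of all finitely generated ideals containing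
`c(f)`; in particular `c(f) ⊆ orc(f)`, with equality when `R` is Noetherian. -/
theorem psContent_le_orc (R : Type*) [CommRing R] (f : PowerSeries R) :
    (∀ J : Ideal R, J.FG →
      (f ∈ J.map (algebraMap R (PowerSeries R)) ↔ psContent R f ≤ J)) ∧
    orc R (PowerSeries R) f = sInf {J : Ideal R | J.FG ∧ psContent R f ≤ J} ∧
    psContent R f ≤ orc R (PowerSeries R) f ∧
    (IsNoetherianRing R → psContent R f = orc R (PowerSeries R) f) := by
  have hle : psContent R f ≤ orc R (PowerSeries R) f := le_sInf fun I => psContent_le_of_mem_map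
  refine ⟨fun J hJ => mem_map_iff_psContent_le hJ, orc_powerSeries_eq_sInf_fg f, hle, fun _ => ?_⟩
  refine hle.antisymm ?_
  rw [orc_powerSeries_eq_sInf_fg]
  exact sInf_le ⟨IsNoetherian.noetherian _, le_rfl⟩
end
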